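/- Every k-tree can be grown from any of its k-cliques; that is, for any k-clique K of a k-tree G, there is a perfect elimination ordering of G whose first k vertices are exactly the vertices of K. -/

import Mathlib

open SimpleGraph

/-- A finite-style graph: a subgraph of the complete graph on `ℕ`,
i.e. a graph together with its vertex set `verts ⊆ ℕ`. -/
abbrev FGraph := SimpleGraph.Subgraph (⊤ : SimpleGraph ℕ)

/-- The complete graph on the vertex set `s`. -/
def cliqueGraph (s : Finset ℕ) : FGraph where
  verts := ↑s
  Adj u v := u ∈ s ∧ v ∈ s ∧ u ≠ v
  adj_sub h := h.2.2
  edge_vert h := h.1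
  symm := ⟨fun u v h => ⟨h.2.1, h.1, h.2.2.symm⟩⟩

/-- Add a new vertex `v` to `G`, joined to the vertices of `s` (which are in `G`). -/
def addVertex (G : FGraph) (v : ℕ) (s : Finset ℕ) : FGraph where
  verts := insert v G.verts
  Adj x y := G.Adj x y ∨ (x = v ∧ y ≠ v ∧ y ∈ s ∧ y ∈ G.verts)
    ∨ (y = v ∧ x ≠ v ∧ x ∈ s ∧ x ∈ G.verts)
  adj_sub h := by
    rcases h with h | h | h
    · exact G.adj_sub h
    · exact fun e => h.2.1 (by rw [← e, h.1])
    · exact fun e => h.2.1 (by rw [e, h.1])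
  edge_vert h := by
    rcases h with h | h | h
    · exact Set.mem_insert_of_mem _ (G.edge_vert h)
    · exact h.1 ▸ Set.mem_insert _ _
    · exact Set.mem_insert_of_mem _ h.2.2.2
  symm := ⟨fun x y h => by
    rcases h with h | h | h
    · exact Or.inl (G.symm.symm _ _ h)
    · exact Or.inr (Or.inr h)
    · exact Or.inr (Or.inl h)⟩

/-- `s` is a clique (of pairwise adjacent vertices) in `G`. -/
def IsCliqueIn (G : FGraph) (s : Finset ℕ) : Prop :=
  ↑s ⊆ G.verts ∧ ∀ u ∈ s, ∀ v ∈ s, u ≠ v → G.Adj u v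

/-- `k`-trees: start from a `k`-clique and repeatedly add a vertex joined to an
existing `k`-clique. -/
inductive IsKTree (k : ℕ) : FGraph → Prop
  | base (s : Finset ℕ) (hs : s.card = k) : IsKTree k (cliqueGraph s)
  | grow (G : FGraph) (hG : IsKTree k G) (s : Finset ℕ) (hs : s.card = k)
      (hclique : IsCliqueIn G s) (v : ℕ) (hv : v ∉ G.verts) :
      IsKTree k (addVertex G v s)

/-- A partial `k`-tree is a subgraph of a `k`-tree. -/
def IsPartialKTree (k : ℕ) (G : FGraph) : Prop := ∃ H : FGraph, IsKTree k H ∧ G ≤ H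

/-- Add the single edge `uv` (and its endpoints) to `G`. -/
def addEdge (G : FGraph) (u v : ℕ) : FGraph where
  verts := insert u (insert v G.verts)
  Adj x y := G.Adj x y ∨ (x = u ∧ y = v ∧ u ≠ v) ∨ (x = v ∧ y = u ∧ u ≠ v)
  adj_sub h := by
    rcases h with h | h | h
    · exact G.adj_sub h
    · exact fun e => h.2.2 (by rw [← h.1, ← h.2.1, e])
    · exact fun e => h.2.2 (by rw [← h.1, ← h.2.1, e])
  edge_vert h := by
    rcases h with h | h | h
    · exact Set.mem_insert_of_mem _ (Set.mem_insert_of_mem _ (G.edge_vert h))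
    · exact h.1 ▸ Set.mem_insert _ _
    · exact h.1 ▸ Set.mem_insert_of_mem _ (Set.mem_insert _ _)
  symm := ⟨fun x y h => by
    rcases h with h | h | h
    · exact Or.inl (G.symm.symm _ _ h)
    · exact Or.inr (Or.inr ⟨h.2.1, h.1, h.2.2⟩)
    · exact Or.inr (Or.inl ⟨h.2.1, h.1, h.2.2⟩)⟩

/-- `G` is a minor of `H`: there are pairwise disjoint nonempty connected branch sets
in `H`, one for each vertex of `G`, with an `H`-edge between the branch sets of any
two `G`-adjacent vertices. -/
def IsMinor (G H : FGraph) : Prop :=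
  ∃ β : ℕ → Finset ℕ,
    (∀ u ∈ G.verts, (β u).Nonempty ∧ ↑(β u) ⊆ H.verts ∧ (H.induce ↑(β u)).coe.Connected) ∧
    (∀ u ∈ G.verts, ∀ v ∈ G.verts, u ≠ v → Disjoint (β u) (β v)) ∧
    (∀ u v, G.Adj u v → ∃ x ∈ β u, ∃ y ∈ β v, H.Adj x y)

/-- The complete graph `K₅`. -/
def K5g : FGraph := cliqueGraph {0, 1, 2, 3, 4}

/-- The complete bipartite graph `K₃,₃` with parts `{0,1,2}` and `{3,4,5}`. -/
def K33g : FGraph where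
  verts := {n : ℕ | n < 6}
  Adj u v := (u < 3 ∧ 3 ≤ v ∧ v < 6) ∨ (v < 3 ∧ 3 ≤ u ∧ u < 6)
  adj_sub := fun {u v} h => by rcases h with h | h <;> exact show u ≠ v by omega
  edge_vert := fun {u v} h => by rcases h with h | h <;> exact show u < 6 by omega
  symm := ⟨fun u v h => by tauto⟩

/-- Planarity via Wagner's theorem: no `K₅` and no `K₃,₃` minor. -/
def Planar (G : FGraph) : Prop := ¬ IsMinor K5g G ∧ ¬ IsMinor K33g G

/-- In a maximal planar graph (planar triangulation), the triangle `abc` bounds a face: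
combinatorially, a new vertex can be placed inside it and joined to `a`, `b`, `c`
while preserving planarity. -/
def IsFaceTriangle (G : FGraph) (a b c : ℕ) : Prop :=
  G.Adj a b ∧ G.Adj b c ∧ G.Adj a c ∧
  ∀ v, v ∉ G.verts → Planar (addVertex G v {a, b, c})

/-- A perfect elimination scheme witnessing that `H` is a `k`-tree: a listing of the
vertices of `H` whose first `k` entries form a clique and each later entry has exactly
`k` earlier neighbours, which form a clique. -/
def IsPESk (k : ℕ) (l : List ℕ) (H : FGraph) : Prop :=
  l.Nodup ∧ H.verts = {v | v ∈ l} ∧ k ≤ l.length ∧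
  (∀ i j : Fin l.length, (i : ℕ) < k → (j : ℕ) < k → i ≠ j → H.Adj (l.get i) (l.get j)) ∧
  (∀ i : Fin l.length, k ≤ (i : ℕ) →
    ∃ s : Finset (Fin l.length), s.card = k ∧ (∀ j ∈ s, (j : ℕ) < (i : ℕ)) ∧
      (∀ a ∈ s, ∀ b ∈ s, a ≠ b → H.Adj (l.get a) (l.get b)) ∧
      (∀ j : Fin l.length, (j : ℕ) < (i : ℕ) → (H.Adj (l.get j) (l.get i) ↔ j ∈ s)))

/-- A vertex is simplicial if its neighbourhood induces a clique. -/
def IsSimplicial (G : FGraph) (v : ℕ) : Prop :=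
  v ∈ G.verts ∧ ∀ u w, G.Adj v u → G.Adj v w → u ≠ w → G.Adj u w

/-- A graph is chordal if it has no induced cycle of length greater than 3. -/
def IsChordal (G : FGraph) : Prop :=
  ∀ n : ℕ, 4 ≤ n → ¬ ∃ f : Fin n → ℕ, Function.Injective f ∧ (∀ i, f i ∈ G.verts) ∧
    ∀ i j : Fin n, G.Adj (f i) (f j) ↔ ((i : ℕ) + 1) % n = (j : ℕ) ∨ ((j : ℕ) + 1) % n = (i : ℕ)

/-- A (general) perfect elimination scheme: an ordering of the vertices such that each
vertex is simplicial in the subgraph induced by it and the earlier vertices. -/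
def IsPES (l : List ℕ) (G : FGraph) : Prop :=
  l.Nodup ∧ G.verts = {v | v ∈ l} ∧
  ∀ i : Fin l.length, IsSimplicial (G.induce {v | v ∈ l.take ((i : ℕ) + 1)}) (l.get i)

/-- `G` can be reduced to the empty graph by repeatedly deleting simplicial vertices. -/
inductive Reducible : FGraph → Prop
  | empty (G : FGraph) (h : G.verts = ∅) : Reducible G
  | delete (G : FGraph) (v : ℕ) (hv : IsSimplicial G v)
      (h : Reducible (G.deleteVerts {v})) : Reducible G

/-- `G` is 3-connected: at least 4 vertices, and deleting any two vertices leaves it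
connected. -/
def ThreeConnected (G : FGraph) : Prop :=
  4 ≤ G.verts.ncard ∧ ∀ S : Finset ℕ, S.card ≤ 2 → (G.deleteVerts ↑S).Connected

/-- `G` has a tree decomposition of width at most `k`. -/
def HasTreewidthLE (G : FGraph) (k : ℕ) : Prop :=
  ∃ (ι : Type) (T : SimpleGraph ι) (B : ι → Finset ℕ),
    T.Connected ∧ T.IsAcyclic ∧
    (∀ v ∈ G.verts, ∃ i, v ∈ B i) ∧
    (∀ u v, G.Adj u v → ∃ i, u ∈ B i ∧ v ∈ B i) ∧
    (∀ v ∈ G.verts, (SimpleGraph.induce {i | v ∈ B i} T).Connected) ∧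
    (∀ i, (B i).card ≤ k + 1)

/-- `G` is acyclic (a forest). -/
def AcyclicFG (G : FGraph) : Prop := G.coe.IsAcyclic

/-- `G` is a complete graph on its vertex set. -/
def CompleteFG (G : FGraph) : Prop := ∀ u ∈ G.verts, ∀ v ∈ G.verts, u ≠ v → G.Adj u v

/-- The path on the three vertices `0, 1, 2`. -/
def P3 : FGraph := addEdge (addEdge (cliqueGraph ∅) 0 1) 1 2

/-!
Induct along the construction of the `k`-tree. When a vertex `v` is attached to a `k`-clique
`s` and `v ∉ K`, append `v` to an ordering grown from `K`. When `v ∈ K`, the clique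
`K \ {v}` consists of neighbours of `v`, so it is `s \ {u}` for a single `u ∈ s`. Grow the
old graph from `s` and replace its first `k` vertices by `K` followed by `u`: the earlier
neighbours of `u` are then exactly `K`, and every later vertex sees the same earlier
neighbours as before, because `v` is adjacent only to `s`.
-/

lemma Finset.exists_erase_eq_erase_of_erase_subset {α : Type*} [DecidableEq α] {K s : Finset α}
    {v : α} (hvK : v ∈ K) (hKs : K.erase v ⊆ s) (hcard : K.card = s.card) :
    ∃ u ∈ s, K.erase v = s.erase u := by
  have hlt : (K.erase v).card < s.card := by
    rw [Finset.card_erase_of_mem hvK, ← hcard]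
    exact Nat.sub_lt (Finset.card_pos.mpr ⟨v, hvK⟩) one_pos
  obtain ⟨u, hus, huK⟩ := Finset.exists_mem_notMem_of_card_lt_card hlt
  refine ⟨u, hus, Finset.eq_of_subset_of_card_le (fun y hy => ?_) ?_⟩
  · exact Finset.mem_erase.mpr ⟨fun h => huK (h ▸ hy), hKs hy⟩
  · rw [Finset.card_erase_of_mem hus, Finset.card_erase_of_mem hvK, hcard]

def AttachesToKClique (k : ℕ) (H : FGraph) (P : List ℕ) (x : ℕ) : Prop :=
  ∃ t : Finset ℕ, t.card = k ∧ (∀ y, y ∈ t ↔ y ∈ P ∧ H.Adj y x) ∧ (t : Set ℕ).Pairwise H.Adj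

/-- `IsPESk` phrased through splittings `l = pre ++ x :: post` instead of indices, and without
fixing the vertex set, so that it survives enlarging the graph. -/
structure IsKTreeOrder (k : ℕ) (H : FGraph) (l : List ℕ) : Prop where
  nodup : l.Nodup
  le_length : k ≤ l.length
  pairwise_take : (l.take k).Pairwise H.Adj
  attaches : ∀ pre x post, l = pre ++ x :: post → k ≤ pre.length → AttachesToKClique k H pre x

section KTreeOrder

variable {k : ℕ} {H H' : FGraph} {l r : List ℕ}

lemma AttachesToKClique.mono {P P' : List ℕ} {x : ℕ} (h : AttachesToKClique k H P x)
    (hle : H ≤ H') (hnbr : ∀ y, y ∈ P' ∧ H'.Adj y x ↔ y ∈ P ∧ H.Adj y x) :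
    AttachesToKClique k H' P' x := by
  obtain ⟨t, hcard, ht, hclique⟩ := h
  exact ⟨t, hcard, fun y => (ht y).trans (hnbr y).symm, hclique.mono' fun _ _ h => hle.2 h⟩

lemma IsKTreeOrder.of_pairwise (hnd : l.Nodup) (hlen : l.length = k) (hadj : l.Pairwise H.Adj) :
    IsKTreeOrder k H l where
  nodup := hnd
  le_length := hlen.ge
  pairwise_take := hadj.take
  attaches pre x post hsplit hpre := by
    have := congrArg List.length hsplit
    simp only [List.length_append, List.length_cons] at this
    omega

lemma IsKTreeOrder.append (h : IsKTreeOrder k H l) (hnd : (l ++ r).Nodup)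
    (hr : ∀ pre x post, r = pre ++ x :: post → AttachesToKClique k H (l ++ pre) x) :
    IsKTreeOrder k H (l ++ r) where
  nodup := hnd
  le_length := h.le_length.trans (List.length_append ▸ Nat.le_add_right _ _)
  pairwise_take := List.take_append_of_le_length h.le_length ▸ h.pairwise_take
  attaches pre x post hsplit hpre := by
    rcases List.append_eq_append_iff.mp hsplit with ⟨mid, rfl, hmid⟩ | ⟨_ | ⟨y, mid⟩, hl, hx⟩
    · exact hr mid x post hmid
    · simpa [hl] using hr [] x post hx.symm
    · obtain ⟨rfl, -⟩ := List.cons.inj hx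
      exact h.attaches pre x mid hl hpre

lemma IsKTreeOrder.concat {x : ℕ} (h : IsKTreeOrder k H l) (hx : x ∉ l)
    (hatt : AttachesToKClique k H l x) : IsKTreeOrder k H (l ++ [x]) := by
  refine h.append (by simpa using h.nodup.concat hx) fun pre y post hsplit => ?_
  simp only [List.cons_eq_append_iff, List.cons.injEq, List.nil_eq_append_iff, reduceCtorEq,
    and_false, exists_false, or_false] at hsplit
  obtain ⟨rfl, rfl, -⟩ := hsplit
  simpa using hatt

lemma IsKTreeOrder.replace_prefix {p q : List ℕ} {w : ℕ} (hq : IsKTreeOrder k H' q)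
    (hl : IsKTreeOrder k H (p ++ r)) (hperm : q.Perm (w :: p)) (hwl : w ∉ p ++ r)
    (hp : k ≤ p.length) (hle : H ≤ H') (hw : ∀ x ∈ r, ¬H'.Adj w x)
    (hadj : ∀ x ∈ r, ∀ y, y ≠ w → H'.Adj y x → H.Adj y x) : IsKTreeOrder k H' (q ++ r) := by
  refine hq.append ((hperm.append_right r).nodup_iff.mpr (hl.nodup.cons hwl))
    fun pre x post hsplit => ?_
  have hxr : x ∈ r := by simp [hsplit]
  refine (hl.attaches (p ++ pre) x post (by simp [hsplit]) (by simp; omega)).mono hle fun y => ?_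
  by_cases hyw : y = w
  · subst hyw
    exact iff_of_false (fun h => hw x hxr h.2) (fun h => hw x hxr (hle.2 h.2))
  · rw [List.mem_append, hperm.mem_iff, List.mem_cons, or_iff_right hyw, ← List.mem_append]
    exact ⟨fun ⟨hy, hyx⟩ => ⟨hy, hadj x hxr y hyw hyx⟩, fun ⟨hy, hyx⟩ => ⟨hy, hle.2 hyx⟩⟩

lemma IsKTreeOrder.mono (h : IsKTreeOrder k H l) (hle : H ≤ H')
    (hadj : ∀ a ∈ l, ∀ b ∈ l, H'.Adj a b → H.Adj a b) : IsKTreeOrder k H' l where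
  nodup := h.nodup
  le_length := h.le_length
  pairwise_take := h.pairwise_take.imp fun h => hle.2 h
  attaches pre x post hsplit hpre := by
    refine (h.attaches pre x post hsplit hpre).mono hle fun y => ⟨fun ⟨hy, hyx⟩ => ⟨hy, ?_⟩,
      fun ⟨hy, hyx⟩ => ⟨hy, hle.2 hyx⟩⟩
    subst hsplit
    exact hadj y (by simp [hy]) x (by simp) hyx

lemma IsKTreeOrder.isPESk (h : IsKTreeOrder k H l) (hverts : H.verts = {v | v ∈ l}) :
    IsPESk k l H := by
  classical
  refine ⟨h.nodup, hverts, h.le_length, fun i j hi hj hij => ?_, fun i hi => ?_⟩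
  · have : Std.Symm H.Adj := ⟨fun _ _ h => h.symm⟩
    exact h.pairwise_take.forall (List.mem_take_iff_getElem.mpr ⟨i, by simp [hi], rfl⟩)
      (List.mem_take_iff_getElem.mpr ⟨j, by simp [hj], rfl⟩)
      (h.nodup.getElem_inj_iff.not.mpr (Fin.val_ne_of_ne hij))
  obtain ⟨t, hcard, ht, hclique⟩ := h.attaches (l.take i) (l.get i) (l.drop (i + 1))
    (by simp [List.getElem_cons_drop]) (by simp; omega)
  set s := Finset.univ.filter fun j : Fin l.length => (j : ℕ) < i ∧ H.Adj (l.get j) (l.get i)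
  have hts : t = s.image l.get := by
    ext y
    simp only [ht, s, List.mem_take_iff_getElem, Finset.mem_image, Finset.mem_filter,
      Finset.mem_univ, true_and, List.get_eq_getElem]
    constructor
    · rintro ⟨⟨j, hj, rfl⟩, hadj⟩
      exact ⟨⟨j, by omega⟩, ⟨by simp at hj; omega, hadj⟩, rfl⟩
    · rintro ⟨j, ⟨hj, hadj⟩, rfl⟩
      exact ⟨⟨j, by simp [hj], rfl⟩, hadj⟩
  refine ⟨s, ?_, fun j hj => (Finset.mem_filter.mp hj).2.1, fun a ha b hb hab => ?_,
    fun j hj => by simp only [s, Finset.mem_filter, Finset.mem_univ, hj, true_and]⟩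
  · rw [← hcard, hts, Finset.card_image_of_injective _ (List.nodup_iff_injective_get.mp h.nodup)]
  · exact hclique (hts ▸ Finset.mem_image_of_mem _ ha) (hts ▸ Finset.mem_image_of_mem _ hb)
      ((List.nodup_iff_injective_get.mp h.nodup).ne hab)

end KTreeOrder

section Clique

variable {k : ℕ} {H : FGraph} {K : Finset ℕ}

lemma IsCliqueIn.subset {K' : Finset ℕ} (hKH : IsCliqueIn H K) (hK' : K' ⊆ K) :
    IsCliqueIn H K' :=
  ⟨(Finset.coe_subset.mpr hK').trans hKH.1, fun a ha b hb => hKH.2 a (hK' ha) b (hK' hb)⟩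

lemma IsCliqueIn.isKTreeOrder_toList (hKH : IsCliqueIn H K) (hK : K.card = k) :
    IsKTreeOrder k H K.toList :=
  .of_pairwise K.nodup_toList (by simp [hK]) <| K.nodup_toList.pairwise_of_forall_ne
    fun a ha b hb => hKH.2 a (Finset.mem_toList.mp ha) b (Finset.mem_toList.mp hb)

lemma IsCliqueIn.isKTreeOrder_toList_concat {u : ℕ} (hKH : IsCliqueIn H K) (hK : K.card = k)
    (huK : u ∉ K) (hu : ∀ y ∈ K, H.Adj y u) : IsKTreeOrder k H (K.toList ++ [u]) :=
  (hKH.isKTreeOrder_toList hK).concat (by simpa using huK)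
    ⟨K, hK, fun y => ⟨fun hy => ⟨Finset.mem_toList.mpr hy, hu y hy⟩,
      fun h => Finset.mem_toList.mp h.1⟩, hKH.2⟩

end Clique

section AddVertex

variable {G : FGraph} {v : ℕ} {s : Finset ℕ}

lemma le_addVertex : G ≤ addVertex G v s := ⟨Set.subset_insert _ _, fun _ _ h => Or.inl h⟩

lemma addVertex_adj_of_ne {x y : ℕ} (hx : x ≠ v) (hy : y ≠ v) :
    (addVertex G v s).Adj x y ↔ G.Adj x y := by
  simp [addVertex, hx, hy]

lemma addVertex_adj_new (hv : v ∉ G.verts) (hs : ↑s ⊆ G.verts) {x : ℕ} :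
    (addVertex G v s).Adj x v ↔ x ∈ s := by
  refine ⟨?_, fun hx => Or.inr (Or.inr ⟨rfl, fun h => hv (h ▸ hs hx), hx, hs hx⟩)⟩
  rintro (h | h | h)
  · exact absurd (G.edge_vert h.symm) hv
  · exact absurd rfl h.2.1
  · exact h.2.2.1

lemma IsCliqueIn.of_addVertex {K : Finset ℕ} (hK : IsCliqueIn (addVertex G v s) K) (hvK : v ∉ K) :
    IsCliqueIn G K := by
  refine ⟨fun x hx => ?_, fun x hx y hy hxy => ?_⟩
  · exact (hK.1 hx).resolve_left fun h => hvK (h ▸ hx)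
  · exact (addVertex_adj_of_ne (ne_of_mem_of_not_mem hx hvK) (ne_of_mem_of_not_mem hy hvK)).mp
      (hK.2 x hx y hy hxy)

lemma IsCliqueIn.insert_addVertex (hsG : IsCliqueIn G s) (hv : v ∉ G.verts) :
    IsCliqueIn (addVertex G v s) (insert v s) := by
  refine ⟨by rw [Finset.coe_insert]; exact Set.insert_subset_insert hsG.1,
    fun a ha b hb hab => ?_⟩
  rcases Finset.mem_insert.mp ha with rfl | has <;> rcases Finset.mem_insert.mp hb with rfl | hbs
  · exact absurd rfl hab
  · exact ((addVertex_adj_new hv hsG.1).mpr hbs).symm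
  · exact (addVertex_adj_new hv hsG.1).mpr has
  · exact Or.inl (hsG.2 a has b hbs hab)

variable {k : ℕ}

lemma IsKTreeOrder.concat_addVertex {l : List ℕ} (hl : IsKTreeOrder k G l)
    (hverts : G.verts = {x | x ∈ l}) (hs : s.card = k) (hsG : IsCliqueIn G s)
    (hv : v ∉ G.verts) : IsKTreeOrder k (addVertex G v s) (l ++ [v]) := by
  have hvl : v ∉ l := by rwa [hverts] at hv
  refine (hl.mono le_addVertex fun a ha b hb => (addVertex_adj_of_ne (ne_of_mem_of_not_mem ha hvl)
    (ne_of_mem_of_not_mem hb hvl)).mp).concat hvl ⟨s, hs, fun y => ?_, ?_⟩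
  · rw [addVertex_adj_new hv hsG.1]
    exact ⟨fun hy => ⟨by simpa [hverts] using hsG.1 hy, hy⟩, And.right⟩
  · exact fun a ha b hb hab => Or.inl (hsG.2 a ha b hb hab)

lemma IsCliqueIn.exists_eq_insert_erase_of_addVertex (hsG : IsCliqueIn G s) (hv : v ∉ G.verts)
    {K : Finset ℕ} (hKG : IsCliqueIn (addVertex G v s) K) (hvK : v ∈ K) (hcard : K.card = s.card) :
    ∃ u ∈ s, K = insert v (s.erase u) := by
  have hKs : K.erase v ⊆ s := fun y hy => (addVertex_adj_new hv hsG.1).mp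
    (hKG.2 y (Finset.mem_of_mem_erase hy) v hvK (Finset.ne_of_mem_erase hy))
  obtain ⟨u, hus, hKu⟩ := Finset.exists_erase_eq_erase_of_erase_subset hvK hKs hcard
  exact ⟨u, hus, by rw [← hKu, Finset.insert_erase hvK]⟩

lemma IsKTreeOrder.reroot_addVertex {p r : List ℕ} (hl : IsKTreeOrder k G (p ++ r))
    (hverts : G.verts = {x | x ∈ p ++ r}) (hp : p.toFinset = s) (hplen : p.length = k)
    (hsG : IsCliqueIn G s) (hv : v ∉ G.verts) {u : ℕ} (hus : u ∈ s)
    (hK : (insert v (s.erase u)).card = k) :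
    IsKTreeOrder k (addVertex G v s) ((insert v (s.erase u)).toList ++ [u] ++ r) ∧
      (addVertex G v s).verts = {x | x ∈ (insert v (s.erase u)).toList ++ [u] ++ r} := by
  set K := insert v (s.erase u)
  have hvl : v ∉ p ++ r := by rwa [hverts] at hv
  have hps : ∀ y, y ∈ p ↔ y ∈ s := fun y => by rw [← hp, List.mem_toFinset]
  have huv : u ≠ v := ne_of_mem_of_not_mem hus fun h => hv (hsG.1 h)
  have huK : u ∉ K := by simp [K, huv]
  have hKs : K ⊆ insert v s := Finset.insert_subset_insert v (Finset.erase_subset u s)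
  have hvsG := hsG.insert_addVertex hv
  have hKG : IsCliqueIn (addVertex G v s) K := hvsG.subset hKs
  have hKu : ∀ y ∈ K, (addVertex G v s).Adj y u := fun y hy =>
    hvsG.2 y (hKs hy) u (Finset.mem_insert_of_mem hus) (ne_of_mem_of_not_mem hy huK)
  have hperm : (K.toList ++ [u]).Perm (v :: p) := by
    refine (List.perm_ext_iff_of_nodup (by simpa using K.nodup_toList.concat (by simpa using huK))
      (hl.nodup.of_append_left.cons fun h => hvl (List.mem_append_left r h))).mpr fun y => ?_
    rw [List.mem_cons, hps]
    by_cases hyu : y = u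
    · simp [hyu, hus]
    · simp [K, hyu]
  refine ⟨(hKG.isKTreeOrder_toList_concat hK huK hKu).replace_prefix hl hperm hvl hplen.ge
    le_addVertex (fun x hxr => ?_) (fun x hxr y hyv => ?_), ?_⟩
  · have hxs : x ∉ s := fun h => List.disjoint_of_nodup_append hl.nodup ((hps x).mpr h) hxr
    rwa [Subgraph.adj_comm, addVertex_adj_new hv hsG.1]
  · exact (addVertex_adj_of_ne hyv (ne_of_mem_of_not_mem (List.mem_append_right p hxr) hvl)).mp
  · ext y
    change _ ↔ y ∈ K.toList ++ [u] ++ r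
    rw [(hperm.append_right r).mem_iff]
    simp [addVertex, hverts]

end AddVertex

theorem IsKTree.exists_kTreeOrder_from_clique {k : ℕ} {G : FGraph} (hG : IsKTree k G)
    {K : Finset ℕ} (hK : K.card = k) (hKG : IsCliqueIn G K) :
    ∃ l, IsKTreeOrder k G l ∧ G.verts = {x | x ∈ l} ∧ (l.take k).toFinset = K := by
  induction hG generalizing K with
  | base s hs =>
    obtain rfl : K = s :=
      Finset.eq_of_subset_of_card_le (Finset.coe_subset.mp hKG.1) (by rw [hK, hs])
    exact ⟨K.toList, hKG.isKTreeOrder_toList hK, by ext; simp [cliqueGraph],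
      by simp [List.take_of_length_le, hK]⟩
  | grow G _ s hs hsG v hv ih =>
    by_cases hvK : v ∈ K
    · obtain ⟨u, hus, rfl⟩ := hsG.exists_eq_insert_erase_of_addVertex hv hKG hvK (hK.trans hs.symm)
      obtain ⟨l, hl, hverts, hp⟩ := ih hs hsG
      have hplen : (l.take k).length = k := by simp [hl.le_length]
      rw [← List.take_append_drop k l] at hl hverts
      obtain ⟨hL, hLverts⟩ := hl.reroot_addVertex hverts hp hplen hsG hv hus hK
      refine ⟨_, hL, hLverts, ?_⟩
      rw [List.append_assoc, List.take_left' (by simp [hK]), Finset.toList_toFinset]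
    · obtain ⟨l, hl, hverts, htake⟩ := ih hK (hKG.of_addVertex hvK)
      refine ⟨l ++ [v], hl.concat_addVertex hverts hs hsG hv, ?_,
        by rwa [List.take_append_of_le_length hl.le_length]⟩
      ext x
      simp [addVertex, hverts, or_comm]

theorem ktree_grown_from_any_clique (k : ℕ) (G : FGraph) (hG : IsKTree k G)
    (K : Finset ℕ) (hcard : K.card = k) (hclique : IsCliqueIn G K) :
    ∃ l : List ℕ, IsPESk k l G ∧ (l.take k).toFinset = K := by
  obtain ⟨l, hl, hverts, hK⟩ := hG.exists_kTreeOrder_from_clique hcard hclique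
  exact ⟨l, hl.isPESk hverts, hK⟩
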